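/- Let S be a convex cost process, D a convex portfolio constraint process, and C the set of claim processes superhedgeable with zero cost. Assume C is a cone and C is closed in probability, and let D^∞ := {y ∈ M^∞ | E ∑_{t=0}^T c_t y_t ≤ 0 for all c ∈ C¹} be the polar cone of C¹. Then for every integrable claim process c ∈ M^1: c ∈ C if and only if E ∑_{t=0}^T c_t y_t ≤ 0 for every y ∈ D^∞. -/

import Mathlib

/-!
If `c ∉ C`, embed `C` into `(L¹)^{T+1}` through `a.e.` equality. Closedness in probability makes
the image a closed convex cone not containing `c`, so Hahn–Banach gives a continuous linear
functional that is `≥ 0` on it and `< 0` at `c`. Each of its components is represented by an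
essentially bounded function (the dual of `L¹` is `L^∞`, obtained from the Riesz representation
on `L²` and density), and replacing that function by its conditional expectation given `ℱ t`
makes it adapted without changing its pairing with adapted claims. Up to sign, the result is a
`y ∈ D^∞` with `E ∑ₜ cₜ yₜ > 0`.
-/

open MeasureTheory Filter

noncomputable section

/-- The portfolio held before time `t`, with the convention `x₋₁ = 0`. -/
def prevP {Ω : Type*} {T : ℕ} {E : Type*} [Zero E]
    (x : Fin (T + 1) → Ω → E) (t : Fin (T + 1)) : Ω → E :=
  if t.1 = 0 then 0 else x ⟨t.1 - 1, lt_of_le_of_lt (Nat.sub_le _ _) t.isLt⟩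

/-- The recession cone of a set in a real vector space. -/
def rcone {V : Type*} [AddCommMonoid V] [SMul ℝ V] (A : Set V) : Set V :=
  {y | ∀ a ∈ A, ∀ α : ℝ, 0 < α → a + α • y ∈ A}

variable {Ω : Type*} {m0 : MeasurableSpace Ω} {T : ℕ} {J : Type*} [Fintype J]

/-- A convex cost process: `S t · ω` is convex, lsc, vanishes at `0`, never `-∞`, and
`S t` is `B(ℝ^J) ⊗ ℱ t`-measurable. -/
structure CostProcess (ℱ : Filtration (Fin (T + 1)) m0) (J : Type*) [Fintype J] where
  S : Fin (T + 1) → (J → ℝ) → Ω → EReal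
  ne_bot : ∀ t x ω, S t x ω ≠ ⊥
  convex : ∀ t ω (x y : J → ℝ) (a b : ℝ), 0 ≤ a → 0 ≤ b → a + b = 1 →
    S t (a • x + b • y) ω ≤ (a : EReal) * S t x ω + (b : EReal) * S t y ω
  lsc : ∀ t ω, LowerSemicontinuous fun x => S t x ω
  zero : ∀ t ω, S t 0 ω = 0
  meas : ∀ t, Measurable[(inferInstance : MeasurableSpace (J → ℝ)).prod (ℱ t)]
    fun p : (J → ℝ) × Ω => S t p.1 p.2

/-- A convex portfolio constraint process: each `D t ω` is closed, convex, contains `0`,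
and `ω ↦ D t ω` is `ℱ t`-measurable. -/
structure ConstraintProcess (ℱ : Filtration (Fin (T + 1)) m0) (J : Type*) [Fintype J] where
  D : Fin (T + 1) → Ω → Set (J → ℝ)
  closed : ∀ t ω, IsClosed (D t ω)
  convex : ∀ t ω, Convex ℝ (D t ω)
  zero_mem : ∀ t ω, (0 : J → ℝ) ∈ D t ω
  meas : ∀ t (U : Set (J → ℝ)), IsOpen U →
    MeasurableSet[ℱ t] {ω | (D t ω ∩ U).Nonempty}

/-- The set `M` of adapted claim processes. -/
def ClaimM (ℱ : Filtration (Fin (T + 1)) m0) : Set (Fin (T + 1) → Ω → ℝ) :=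
  {c | Adapted ℱ c}

/-- The set `M₋` of almost surely nonpositive claim processes. -/
def Mminus (P : Measure Ω) (ℱ : Filtration (Fin (T + 1)) m0) :
    Set (Fin (T + 1) → Ω → ℝ) :=
  {c | c ∈ ClaimM ℱ ∧ ∀ t, ∀ᵐ ω ∂P, c t ω ≤ 0}

/-- The set `C` of claim processes superhedgeable with zero cost. -/
def Cset (P : Measure Ω) (ℱ : Filtration (Fin (T + 1)) m0)
    (S : CostProcess ℱ J) (D : ConstraintProcess ℱ J) :
    Set (Fin (T + 1) → Ω → ℝ) :=
  {c | c ∈ ClaimM ℱ ∧ ∃ x : Fin (T + 1) → Ω → (J → ℝ), Adapted ℱ x ∧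
    x (Fin.last T) = 0 ∧
    ∀ᵐ ω ∂P, ∀ t, x t ω ∈ D.D t ω ∧
      S.S t (x t ω - prevP x t ω) ω + (c t ω : EReal) ≤ 0}

/-- The set `M¹` of integrable claim processes. -/
def M1 (P : Measure Ω) (ℱ : Filtration (Fin (T + 1)) m0) :
    Set (Fin (T + 1) → Ω → ℝ) :=
  {c | c ∈ ClaimM ℱ ∧ ∀ t, Integrable (c t) P}

/-- The set `M^∞` of essentially bounded claim processes. -/
def Minf (P : Measure Ω) (ℱ : Filtration (Fin (T + 1)) m0) :
    Set (Fin (T + 1) → Ω → ℝ) :=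
  {c | c ∈ ClaimM ℱ ∧ ∀ t, MemLp (c t) ⊤ P}

/-- The bilinear pairing `E ∑ₜ cₜ yₜ`. -/
def pairing (P : Measure Ω) (c y : Fin (T + 1) → Ω → ℝ) : ℝ :=
  ∫ ω, ∑ t, c t ω * y t ω ∂P

/-- The support function `σ_{C¹}(y) = sup_{c ∈ C¹} E ∑ₜ cₜ yₜ` of a set of integrable
claim processes. -/
def sigmaSup (P : Measure Ω) (A : Set (Fin (T + 1) → Ω → ℝ))
    (y : Fin (T + 1) → Ω → ℝ) : EReal :=
  sSup ((fun c => ((pairing P c y : ℝ) : EReal)) '' A)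

/-- `A` is closed in probability (within the space `M` of adapted claim processes). -/
def ClosedInProb (P : Measure Ω) (ℱ : Filtration (Fin (T + 1)) m0)
    (A : Set (Fin (T + 1) → Ω → ℝ)) : Prop :=
  ∀ cs : ℕ → Fin (T + 1) → Ω → ℝ, (∀ n, cs n ∈ A) →
    ∀ c ∈ ClaimM ℱ, (∀ t, TendstoInMeasure P (fun n => cs n t) atTop (c t)) → c ∈ A

open scoped ENNReal

theorem exists_L2_repr {P : Measure Ω} (φ : Lp ℝ 2 P →L[ℝ] ℝ) :
    ∃ G : Lp ℝ 2 P, ∀ v, φ v = ∫ ω, G ω * v ω ∂P := by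
  refine ⟨(InnerProductSpace.toDual ℝ (Lp ℝ 2 P)).symm φ, fun v => ?_⟩
  rw [← InnerProductSpace.toDual_symm_apply (x := v), L2.inner_def]
  simp [mul_comm]

section FiniteMeasure

variable (P : Measure Ω) [IsFiniteMeasure P]

/-- Multiplication by the constant `1 ∈ L²`, with Hölder's inequality for `1/2 + 1/2 = 1`. -/
def L2ToL1 : Lp ℝ 2 P →L[ℝ] Lp ℝ 1 P :=
  (ContinuousLinearMap.mul ℝ ℝ).holderL P 2 2 1 (Lp.const 2 P 1)

variable {P}

theorem coeFn_L2ToL1 (v : Lp ℝ 2 P) : (L2ToL1 P v : Ω → ℝ) =ᵐ[P] v := by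
  filter_upwards [ContinuousLinearMap.coeFn_holder (r := 1) (ContinuousLinearMap.mul ℝ ℝ)
    (Lp.const 2 P (1 : ℝ)) v, Lp.coeFn_const 2 P (1 : ℝ)] with ω h₁ h₂
  rw [L2ToL1, ContinuousLinearMap.holderL_apply_apply, h₁, h₂]
  simp

theorem ae_abs_le_of_abs_setIntegral_le {G : Ω → ℝ} (hG : Integrable G P) {C : ℝ}
    (h : ∀ s, MeasurableSet s → |∫ ω in s, G ω ∂P| ≤ C * P.real s) :
    ∀ᵐ ω ∂P, |G ω| ≤ C := by
  have hle : ∀ f : Ω → ℝ, Integrable f P →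
      (∀ s, MeasurableSet s → ∫ ω in s, f ω ∂P ≤ C * P.real s) → f ≤ᵐ[P] fun _ => C :=
    fun f hf hs => ae_le_of_forall_setIntegral_le hf (integrable_const C) fun s hs' _ => by
      simpa [setIntegral_const, mul_comm] using hs s hs'
  filter_upwards [hle G hG fun s hs => (le_abs_self _).trans (h s hs),
    hle (-G) hG.neg fun s hs => by simpa [integral_neg] using (neg_le_abs _).trans (h s hs)]
    with ω h₁ h₂
  exact abs_le.2 ⟨by simp at h₂; linarith, h₁⟩

theorem abs_setIntegral_le_of_L2_repr (g : Lp ℝ 1 P →L[ℝ] ℝ) {G : Lp ℝ 2 P}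
    (hG : ∀ v, g (L2ToL1 P v) = ∫ ω, G ω * v ω ∂P) {s : Set Ω} (hs : MeasurableSet s) :
    |∫ ω in s, G ω ∂P| ≤ ‖g‖ * P.real s := by
  have hind : L2ToL1 P (indicatorConstLp 2 hs (measure_ne_top P s) 1)
      = indicatorConstLp 1 hs (measure_ne_top P s) 1 := by
    refine Lp.ext ((coeFn_L2ToL1 _).trans ?_)
    filter_upwards [indicatorConstLp_coeFn (p := 2) (hs := hs) (hμs := measure_ne_top P s)
      (c := (1 : ℝ)), indicatorConstLp_coeFn (p := 1) (hs := hs) (hμs := measure_ne_top P s)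
      (c := (1 : ℝ))] with ω h₂ h₁
    rw [h₁, h₂]
  have hint : ∫ ω in s, G ω ∂P = g (indicatorConstLp 1 hs (measure_ne_top P s) 1) := by
    rw [← hind, hG, ← integral_indicator hs]
    refine integral_congr_ae ?_
    filter_upwards [indicatorConstLp_coeFn (p := 2) (hs := hs) (hμs := measure_ne_top P s)
      (c := (1 : ℝ))] with ω h
    by_cases hω : ω ∈ s <;> simp [h, hω]
  rw [hint]
  calc |g (indicatorConstLp 1 hs (measure_ne_top P s) 1)|
      ≤ ‖g‖ * ‖indicatorConstLp 1 hs (measure_ne_top P s) (1 : ℝ)‖ := g.le_opNorm _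
    _ ≤ ‖g‖ * P.real s := by
      gcongr
      simpa using norm_indicatorConstLp_le (p := 1) (hs := hs) (hμs := measure_ne_top P s)
        (c := (1 : ℝ))

theorem apply_eq_integral_mul_of_L2_repr (g : Lp ℝ 1 P →L[ℝ] ℝ) {G : Lp ℝ 2 P}
    (hG : ∀ v, g (L2ToL1 P v) = ∫ ω, G ω * v ω ∂P) (hGtop : MemLp G ∞ P) (v : Lp ℝ 1 P) :
    g v = ∫ ω, v ω * G ω ∂P := by
  let Ψ : Lp ℝ 1 P →L[ℝ] ℝ := ((ContinuousLinearMap.mul ℝ ℝ).lpPairing P 1 ∞).flip hGtop.toLp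
  have hΨ : ∀ w : Lp ℝ 1 P, Ψ w = ∫ ω, w ω * G ω ∂P := fun w => by
    simp only [Ψ, ContinuousLinearMap.flip_apply, ContinuousLinearMap.lpPairing_eq_integral]
    refine integral_congr_ae ?_
    filter_upwards [hGtop.coeFn_toLp] with ω h
    simp [h]
  have hgΨ : (g : Lp ℝ 1 P → ℝ) = Ψ := by
    refine Continuous.ext_on (Lp.simpleFunc.denseRange ENNReal.one_ne_top) g.continuous
      Ψ.continuous ?_
    rintro _ ⟨q, rfl⟩
    let u := Lp.simpleFunc.toSimpleFunc q
    have hu₂ := u.memLp_of_isFiniteMeasure 2 P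
    have hu : L2ToL1 P hu₂.toLp = q :=
      Lp.ext <| ((coeFn_L2ToL1 _).trans hu₂.coeFn_toLp).trans
        (Lp.simpleFunc.toSimpleFunc_eq_toFun q)
    rw [← hu, hG, hu, hΨ]
    refine integral_congr_ae ?_
    filter_upwards [hu₂.coeFn_toLp, Lp.simpleFunc.toSimpleFunc_eq_toFun q] with ω h₁ h₂
    rw [h₁, mul_comm, ← h₂]
  rw [hgΨ, hΨ]

theorem exists_memLp_top_repr (g : Lp ℝ 1 P →L[ℝ] ℝ) :
    ∃ y : Ω → ℝ, MemLp y ∞ P ∧ ∀ v : Lp ℝ 1 P, g v = ∫ ω, v ω * y ω ∂P := by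
  obtain ⟨G, hG⟩ := exists_L2_repr (g.comp (L2ToL1 P))
  have hbound : ∀ᵐ ω ∂P, |G ω| ≤ ‖g‖ :=
    ae_abs_le_of_abs_setIntegral_le ((Lp.memLp G).integrable one_le_two)
      fun s hs => abs_setIntegral_le_of_L2_repr g hG hs
  have hGtop : MemLp G ∞ P := memLp_top_of_bound (Lp.aestronglyMeasurable G) ‖g‖ hbound
  exact ⟨G, hGtop, apply_eq_integral_mul_of_L2_repr g hG hGtop⟩

theorem integral_mul_condExp_of_stronglyMeasurable {m : MeasurableSpace Ω} (hm : m ≤ m0)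
    {c y : Ω → ℝ} (hc : StronglyMeasurable[m] c) (hci : Integrable c P) (hy : MemLp y ∞ P) :
    ∫ ω, c ω * P[y | m] ω ∂P = ∫ ω, c ω * y ω ∂P := by
  have hcy : Integrable (c * y) P := hci.mul_of_top_left hy
  calc ∫ ω, c ω * P[y | m] ω ∂P = ∫ ω, P[c * y | m] ω ∂P :=
        integral_congr_ae (condExp_mul_of_stronglyMeasurable_left hc hcy
          (hy.integrable le_top)).symm
    _ = ∫ ω, c ω * y ω ∂P := integral_condExp hm

end FiniteMeasure

theorem tendstoInMeasure_const_of_ae_eq {α ι E : Type*} [MeasurableSpace α] [PseudoEMetricSpace E]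
    {μ : Measure α} {l : Filter ι} {f g : α → E} (h : f =ᵐ[μ] g) :
    TendstoInMeasure μ (fun _ => f) l g := fun ε hε => by
  have hnull : μ {x | ε ≤ edist (f x) (g x)} = 0 :=
    measure_mono_null (t := {x | f x ≠ g x})
      (fun x hx (hfg : f x = g x) => by simp [hfg] at hx; exact hε.ne' hx) h
  simpa [hnull] using tendsto_const_nhds

theorem Convex.add_mem_of_pos_smul_mem {E : Type*} [AddCommGroup E] [Module ℝ E] {s : Set E}
    (hs : Convex ℝ s) (hsmul : ∀ x ∈ s, ∀ α : ℝ, 0 < α → α • x ∈ s) {x y : E} (hx : x ∈ s)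
    (hy : y ∈ s) : x + y ∈ s := by
  have := hsmul _ (hs hx hy (by norm_num : (0 : ℝ) ≤ 1 / 2) (by norm_num : (0 : ℝ) ≤ 1 / 2)
    (by norm_num)) 2 two_pos
  simpa [smul_add, smul_smul] using this

theorem EReal.add_coe_nonpos_of_le_mul_add_mul {s x₁ x₂ : EReal} {a b c₁ c₂ : ℝ} (ha : 0 ≤ a)
    (hb : 0 ≤ b) (hx₁ : x₁ ≠ ⊥) (hx₂ : x₂ ≠ ⊥) (h₁ : x₁ + c₁ ≤ 0) (h₂ : x₂ + c₂ ≤ 0)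
    (hs : s ≤ a * x₁ + b * x₂) : s + ((a * c₁ + b * c₂ : ℝ) : EReal) ≤ 0 := by
  have real_of_le {x : EReal} {c : ℝ} (hx : x ≠ ⊥) (h : x + c ≤ 0) : ∃ r : ℝ, x = r :=
    ⟨x.toReal, (EReal.coe_toReal (fun htop => by simp [htop] at h) hx).symm⟩
  obtain ⟨r₁, rfl⟩ := real_of_le hx₁ h₁
  obtain ⟨r₂, rfl⟩ := real_of_le hx₂ h₂
  norm_cast at h₁ h₂ hs
  calc s + ((a * c₁ + b * c₂ : ℝ) : EReal)
        ≤ ((a * r₁ + b * r₂ : ℝ) : EReal) + (a * c₁ + b * c₂ : ℝ) := add_le_add hs le_rfl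
    _ ≤ 0 := by norm_cast; nlinarith

section Portfolio

variable {E : Type*}

theorem prevP_zero [Zero E] (t : Fin (T + 1)) : prevP (0 : Fin (T + 1) → Ω → E) t = 0 := by
  unfold prevP; split_ifs <;> rfl

theorem prevP_add [AddZeroClass E] (x y : Fin (T + 1) → Ω → E) (t : Fin (T + 1)) :
    prevP (x + y) t = prevP x t + prevP y t := by
  unfold prevP; split_ifs <;> simp

theorem prevP_smul [Zero E] [SMulZeroClass ℝ E] (a : ℝ) (x : Fin (T + 1) → Ω → E)
    (t : Fin (T + 1)) : prevP (a • x) t = a • prevP x t := by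
  unfold prevP; split_ifs <;> simp

end Portfolio

section Claims

variable {P : Measure Ω} {ℱ : Filtration (Fin (T + 1)) m0} (S : CostProcess ℱ J)
  (D : ConstraintProcess ℱ J)

theorem zero_mem_Cset : (0 : Fin (T + 1) → Ω → ℝ) ∈ Cset P ℱ S D :=
  ⟨fun _ => measurable_const, 0, fun _ => measurable_const, rfl,
    ae_of_all _ fun ω t => ⟨D.zero_mem t ω, by simp [prevP_zero, S.zero]⟩⟩

theorem convex_Cset : Convex ℝ (Cset P ℱ S D) := by
  rintro c₁ ⟨hc₁, x₁, hx₁, hx₁T, h₁⟩ c₂ ⟨hc₂, x₂, hx₂, hx₂T, h₂⟩ a b ha hb hab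
  refine ⟨(hc₁.smul a).add (hc₂.smul b), a • x₁ + b • x₂, (hx₁.smul a).add (hx₂.smul b),
    by simp [hx₁T, hx₂T], ?_⟩
  filter_upwards [h₁, h₂] with ω h₁ h₂ t
  have hincr : (a • x₁ + b • x₂) t ω - prevP (a • x₁ + b • x₂) t ω
      = a • (x₁ t ω - prevP x₁ t ω) + b • (x₂ t ω - prevP x₂ t ω) := by
    rw [prevP_add, prevP_smul, prevP_smul]
    simp only [Pi.add_apply, Pi.smul_apply, smul_sub]
    abel
  refine ⟨D.convex t ω (h₁ t).1 (h₂ t).1 ha hb hab, ?_⟩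
  rw [hincr]
  exact EReal.add_coe_nonpos_of_le_mul_add_mul ha hb (S.ne_bot _ _ _) (S.ne_bot _ _ _)
    (h₁ t).2 (h₂ t).2 (S.convex t ω _ _ a b ha hb hab)

end Claims

section ClosedInProb

variable {P : Measure Ω} {ℱ : Filtration (Fin (T + 1)) m0} {A : Set (Fin (T + 1) → Ω → ℝ)}

theorem ClosedInProb.mem_of_ae_eq (hA : ClosedInProb P ℱ A) {c' c : Fin (T + 1) → Ω → ℝ}
    (hc' : c' ∈ A) (hc : c ∈ ClaimM ℱ) (h : ∀ t, c' t =ᵐ[P] c t) : c ∈ A :=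
  hA (fun _ => c') (fun _ => hc') c hc fun t => tendstoInMeasure_const_of_ae_eq (h t)

theorem ClosedInProb.isClosed_setOf_ae_eq (hA : ClosedInProb P ℱ A) (hAM : A ⊆ ClaimM ℱ) :
    IsClosed {k : Fin (T + 1) → Lp ℝ 1 P | ∃ c ∈ A, ∀ t, (k t : Ω → ℝ) =ᵐ[P] c t} := by
  refine IsSeqClosed.isClosed fun ks k hks hlim => ?_
  choose cs hcsA hcs using hks
  have hlim_t : ∀ t, Tendsto (fun n => ks n t) atTop (nhds (k t)) := tendsto_pi_nhds.1 hlim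
  have hmeas : ∀ t, AEStronglyMeasurable[ℱ t] (k t : Ω → ℝ) P := fun t =>
    (isClosed_aestronglyMeasurable (ℱ.le t)).mem_of_tendsto (hlim_t t) <| .of_forall fun n =>
      ((hAM (hcsA n) t).stronglyMeasurable.aestronglyMeasurable).congr (hcs n t).symm
  choose c hc hkc using hmeas
  refine ⟨c, hA cs hcsA c (fun t => (hc t).measurable) fun t => ?_, hkc⟩
  exact (tendstoInMeasure_of_tendsto_Lp (hlim_t t)).congr (fun n => hcs n t) (hkc t)

end ClosedInProb

def l1ProperCone (P : Measure Ω) (ℱ : Filtration (Fin (T + 1)) m0) (S : CostProcess ℱ J)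
    (D : ConstraintProcess ℱ J)
    (hcone : ∀ c ∈ Cset P ℱ S D, ∀ α : ℝ, 0 < α → α • c ∈ Cset P ℱ S D)
    (hcl : ClosedInProb P ℱ (Cset P ℱ S D)) : ProperCone ℝ (Fin (T + 1) → Lp ℝ 1 P) where
  carrier := {k | ∃ c ∈ Cset P ℱ S D, ∀ t, (k t : Ω → ℝ) =ᵐ[P] c t}
  zero_mem' := ⟨0, zero_mem_Cset S D, fun t => Lp.coeFn_zero ℝ 1 P⟩
  add_mem' := by
    rintro k₁ k₂ ⟨c₁, hc₁, h₁⟩ ⟨c₂, hc₂, h₂⟩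
    exact ⟨c₁ + c₂, (convex_Cset S D).add_mem_of_pos_smul_mem hcone hc₁ hc₂,
      fun t => (Lp.coeFn_add _ _).trans ((h₁ t).add (h₂ t))⟩
  smul_mem' := by
    rintro ⟨r, hr⟩ k ⟨c, hc, h⟩
    have hrc : r • c ∈ Cset P ℱ S D := by
      rcases hr.eq_or_lt with hr | hr
      · rw [← hr, zero_smul]
        exact zero_mem_Cset S D
      · exact hcone c hc r hr
    exact ⟨r • c, hrc, fun t => (Lp.coeFn_smul r (k t)).trans ((h t).const_smul _)⟩
  isClosed' := hcl.isClosed_setOf_ae_eq fun _ hc => hc.1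

theorem exists_mem_Minf_pairing_eq (P : Measure Ω) [IsFiniteMeasure P]
    (ℱ : Filtration (Fin (T + 1)) m0) (f : (Fin (T + 1) → Lp ℝ 1 P) →L[ℝ] ℝ) :
    ∃ Y ∈ Minf P ℱ, ∀ c ∈ ClaimM ℱ, ∀ k : Fin (T + 1) → Lp ℝ 1 P,
      (∀ t, (k t : Ω → ℝ) =ᵐ[P] c t) → pairing P c Y = f k := by
  choose y hy hyrep using fun t => exists_memLp_top_repr
    (f.comp (ContinuousLinearMap.single ℝ (fun _ : Fin (T + 1) => Lp ℝ 1 P) t))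
  refine ⟨fun t => P[y t | ℱ t],
    ⟨fun t => stronglyMeasurable_condExp.measurable, fun t => (hy t).condExp le_top⟩, ?_⟩
  intro c hc k hk
  have hci : ∀ t, Integrable (c t) P := fun t => (L1.integrable_coeFn (k t)).congr (hk t)
  calc pairing P c (fun t => P[y t | ℱ t]) = ∑ t, ∫ ω, c t ω * P[y t | ℱ t] ω ∂P :=
        integral_finsetSum _ fun t _ => (hci t).mul_of_top_left ((hy t).condExp le_top)
    _ = ∑ t, ∫ ω, c t ω * y t ω ∂P := Finset.sum_congr rfl fun t _ =>
        integral_mul_condExp_of_stronglyMeasurable (ℱ.le t) (hc t).stronglyMeasurable (hci t)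
          (hy t)
    _ = ∑ t, f (Pi.single t (k t)) := Finset.sum_congr rfl fun t _ => by
        refine (integral_congr_ae ?_).trans (hyrep t (k t)).symm
        filter_upwards [hk t] with ω h
        rw [h]
    _ = f k := by rw [← map_sum, Finset.univ_sum_single]

theorem mem_Cset_iff_pairing_nonpos_of_cone_general
    (P : Measure Ω) [IsProbabilityMeasure P] (ℱ : Filtration (Fin (T + 1)) m0)
    (S : CostProcess ℱ J) (D : ConstraintProcess ℱ J)
    (hcone : ∀ c ∈ Cset P ℱ S D, ∀ α : ℝ, 0 < α → α • c ∈ Cset P ℱ S D)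
    (hcl : ClosedInProb P ℱ (Cset P ℱ S D)) :
    ∀ c ∈ M1 P ℱ, (c ∈ Cset P ℱ S D ↔
      ∀ y ∈ {y ∈ Minf P ℱ | ∀ c' ∈ Cset P ℱ S D ∩ M1 P ℱ, pairing P c' y ≤ 0},
        pairing P c y ≤ 0) := by
  intro c hc
  refine ⟨fun hcC y hy => hy.2 c ⟨hcC, hc⟩, fun hpolar => ?_⟩
  by_contra hcC
  let kc : Fin (T + 1) → Lp ℝ 1 P := fun t => (hc.2 t).toL1 (c t)
  have hkc : kc ∉ l1ProperCone P ℱ S D hcone hcl := fun ⟨c', hc', h⟩ =>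
    hcC (hcl.mem_of_ae_eq hc' hc.1 fun t => (h t).symm.trans (hc.2 t).coeFn_toL1)
  obtain ⟨f, hfK, hfc⟩ := (l1ProperCone P ℱ S D hcone hcl).hyperplane_separation_point hkc
  obtain ⟨Y, hY, hpair⟩ := exists_mem_Minf_pairing_eq P ℱ (-f)
  have hYpolar : ∀ c' ∈ Cset P ℱ S D ∩ M1 P ℱ, pairing P c' Y ≤ 0 := by
    rintro c' ⟨hc'C, hc'⟩
    rw [hpair c' hc'.1 _ fun t => (hc'.2 t).coeFn_toL1]
    simpa using hfK _ ⟨c', hc'C, fun t => (hc'.2 t).coeFn_toL1⟩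
  have hcY := hpolar Y ⟨hY, hYpolar⟩
  rw [hpair c hc.1 kc fun t => (hc.2 t).coeFn_toL1] at hcY
  simp only [neg_apply, neg_nonpos] at hcY
  exact hfc.not_ge hcY

/-- Corollary 6, part 1: if `C` is a cone closed in probability, then an
integrable claim process belongs to `C` iff `E ∑ₜ cₜ yₜ ≤ 0` for every `y` in the polar cone
`D^∞` of `C¹`. -/
theorem mem_Cset_iff_pairing_nonpos_of_cone
    (P : Measure Ω) [IsProbabilityMeasure P] (ℱ : Filtration (Fin (T + 1)) m0)
    (hcomp : ∀ (t : Fin (T + 1)) (s : Set Ω), P s = 0 → MeasurableSet[ℱ t] s)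
    (S : CostProcess ℱ J) (D : ConstraintProcess ℱ J)
    (hcone : ∀ c ∈ Cset P ℱ S D, ∀ α : ℝ, 0 < α → α • c ∈ Cset P ℱ S D)
    (hcl : ClosedInProb P ℱ (Cset P ℱ S D)) :
    ∀ c ∈ M1 P ℱ, (c ∈ Cset P ℱ S D ↔
      ∀ y ∈ {y ∈ Minf P ℱ | ∀ c' ∈ Cset P ℱ S D ∩ M1 P ℱ, pairing P c' y ≤ 0},
        pairing P c y ≤ 0) :=
  mem_Cset_iff_pairing_nonpos_of_cone_general P ℱ S D hcone hcl
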